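/- For A, B ∈ ℂ^{m×n}, the equation AX = B has a Hermitian solution X ∈ ℂ^{n×n} if and only if the column space of B is contained in the column space of A and AB* = BA*. In that case, X = A†B + (A†B)* − A†BA†A + (I − A†A)U(I − A†A) is a Hermitian solution for every Hermitian U. -/

import Mathlib

/-!
Necessity is immediate from `B = A X` and `X = Xᴴ`. For sufficiency, any `C` with `A C A = A`
and `(C A)ᴴ = C A` can stand in for `A†`: the column condition gives `A C B = B`, the condition
`A Bᴴ = B Aᴴ` turns `C B C A` into the Hermitian matrix `C A (C B)ᴴ`, and `A (1 - C A) = 0` kills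
the `U`-term. The Moore–Penrose inverse exists: if `G` is `t ↦ t⁻¹` (with `0⁻¹ = 0`) applied to
`H = Aᴴ A` by the functional calculus, then `H G H = H` forces `A G H = A`, and `G Aᴴ` satisfies
all four Penrose equations.
-/

open Matrix
open scoped ComplexOrder

def IsMoorePenrose {m n : Type*} [Fintype m] [Fintype n]
    (A : Matrix m n ℂ) (X : Matrix n m ℂ) : Prop :=
  A * X * A = A ∧ X * A * X = X ∧ (A * X)ᴴ = A * X ∧ (X * A)ᴴ = X * A

open Classical in
noncomputable def pinv {m n : Type*} [Fintype m] [Fintype n]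
    (A : Matrix m n ℂ) : Matrix n m ℂ :=
  if h : ∃ X, IsMoorePenrose A X then h.choose else 0

namespace Matrix

variable {m n k : Type*} [Fintype n] [Fintype k]

theorem range_mulVecLin_mul_le {R : Type*} [CommSemiring R] (A : Matrix m n R)
    (X : Matrix n k R) : LinearMap.range (A * X).mulVecLin ≤ LinearMap.range A.mulVecLin := by
  rw [mulVecLin_mul]
  exact LinearMap.range_comp_le_range _ _

variable [Fintype m]

theorem mul_mul_eq_of_range_le {R : Type*} [CommRing R] {A : Matrix m n R}
    {C : Matrix n m R} {B : Matrix m k R} (hAC : A * C * A = A)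
    (hB : LinearMap.range B.mulVecLin ≤ LinearMap.range A.mulVecLin) : A * (C * B) = B := by
  classical
  refine toLin'.injective (LinearMap.ext fun v => ?_)
  obtain ⟨y, hy⟩ := hB ⟨v, rfl⟩
  simp only [mulVecLin_apply] at hy
  rw [toLin'_apply, toLin'_apply, ← hy, ← Matrix.mul_assoc, ← mulVec_mulVec, ← hy, mulVec_mulVec,
    hAC]

theorem mul_eq_self_of_conjTranspose_mul_self_mul_eq {𝕜 : Type*} [RCLike 𝕜] [DecidableEq n]
    {A : Matrix m n 𝕜} {P : Matrix n n 𝕜} (hP : Aᴴ * A * P = Aᴴ * A) : A * P = A := by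
  have hHQ : Aᴴ * A * (1 - P) = 0 := by rw [Matrix.mul_sub, Matrix.mul_one, hP, sub_self]
  have hsq : (A * (1 - P))ᴴ * (A * (1 - P)) = 0 := by
    rw [conjTranspose_mul, Matrix.mul_assoc, ← Matrix.mul_assoc Aᴴ, hHQ, Matrix.mul_zero]
  have hAQ := conjTranspose_mul_self_eq_zero.mp hsq
  rwa [Matrix.mul_sub, Matrix.mul_one, sub_eq_zero, eq_comm] at hAQ

namespace IsHermitian

variable {𝕜 : Type*} [RCLike 𝕜] [DecidableEq n] {H : Matrix n n 𝕜}

theorem mul_cfc_inv_mul_self (hH : H.IsHermitian) : H * cfc (·⁻¹ : ℝ → ℝ) H * H = H := by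
  have hcont (f : ℝ → ℝ) : ContinuousOn f (spectrum ℝ H) := H.finite_real_spectrum.continuousOn f
  calc H * cfc (·⁻¹ : ℝ → ℝ) H * H = cfc (fun x : ℝ => x * x⁻¹ * x) H := by
        rw [cfc_mul _ _ H (hcont _) (hcont _), cfc_mul _ _ H (hcont _) (hcont _),
          cfc_id' ℝ H hH.isSelfAdjoint]
    _ = H := by simp only [mul_inv_mul_cancel]; exact cfc_id' ℝ H hH.isSelfAdjoint

theorem cfc_inv_mul_self_mul_cfc_inv (hH : H.IsHermitian) :
    cfc (·⁻¹ : ℝ → ℝ) H * H * cfc (·⁻¹ : ℝ → ℝ) H = cfc (·⁻¹ : ℝ → ℝ) H := by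
  have hcont (f : ℝ → ℝ) : ContinuousOn f (spectrum ℝ H) := H.finite_real_spectrum.continuousOn f
  calc cfc (·⁻¹ : ℝ → ℝ) H * H * cfc (·⁻¹ : ℝ → ℝ) H = cfc (fun x : ℝ => x⁻¹ * x * x⁻¹) H := by
        rw [cfc_mul _ _ H (hcont _) (hcont _), cfc_mul _ _ H (hcont _) (hcont _),
          cfc_id' ℝ H hH.isSelfAdjoint]
    _ = cfc (·⁻¹ : ℝ → ℝ) H := cfc_congr fun x _ => by simpa using mul_inv_mul_cancel x⁻¹

end IsHermitian

theorem exists_isMoorePenrose (A : Matrix m n ℂ) : ∃ X, IsMoorePenrose A X := by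
  classical
  have hH := isHermitian_conjTranspose_mul_self A
  set G := cfc (·⁻¹ : ℝ → ℝ) (Aᴴ * A)
  have hG : G.IsHermitian := cfc_predicate (p := IsSelfAdjoint) _ _
  have hHG : Aᴴ * A * G = G * (Aᴴ * A) :=
    (cfc_id' ℝ (Aᴴ * A) hH.isSelfAdjoint ▸ cfc_commute_cfc _ _ _ : Commute (Aᴴ * A) G)
  have hAGH : A * (G * (Aᴴ * A)) = A :=
    mul_eq_self_of_conjTranspose_mul_self_mul_eq <| by
      rw [← Matrix.mul_assoc, hH.mul_cfc_inv_mul_self]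
  refine ⟨G * Aᴴ, ?_, ?_, ?_, ?_⟩
  · simpa only [Matrix.mul_assoc] using hAGH
  · simpa only [Matrix.mul_assoc] using congrArg (· * Aᴴ) hH.cfc_inv_mul_self_mul_cfc_inv
  · rw [conjTranspose_mul, conjTranspose_mul, conjTranspose_conjTranspose, hG.eq, Matrix.mul_assoc]
  · rw [Matrix.mul_assoc, conjTranspose_mul, hG.eq, hH.eq, hHG]

theorem isMoorePenrose_pinv (A : Matrix m n ℂ) : IsMoorePenrose A (pinv A) := by
  rw [pinv, dif_pos (exists_isMoorePenrose A)]
  exact (exists_isMoorePenrose A).choose_spec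

section HermitianSolution

variable {R : Type*} [Ring R] [StarRing R] [DecidableEq n]

def hermitianSolution (A : Matrix m n R) (C : Matrix n m R) (B : Matrix m n R)
    (U : Matrix n n R) : Matrix n n R :=
  C * B + (C * B)ᴴ - C * B * (C * A) + (1 - C * A) * U * (1 - C * A)

variable {A : Matrix m n R} {C : Matrix n m R} {B : Matrix m n R} {U : Matrix n n R}

theorem isHermitian_hermitianSolution (hCA : (C * A)ᴴ = C * A) (hAB : A * Bᴴ = B * Aᴴ)
    (hU : U.IsHermitian) : (hermitianSolution A C B U).IsHermitian := by
  have hP : (1 - C * A)ᴴ = 1 - C * A := by rw [conjTranspose_sub, conjTranspose_one, hCA]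
  have hCBCA : (C * B * (C * A))ᴴ = C * B * (C * A) := by
    calc (C * B * (C * A))ᴴ = C * (A * Bᴴ) * Cᴴ := by
          rw [conjTranspose_mul, hCA, conjTranspose_mul]; simp only [Matrix.mul_assoc]
      _ = C * B * (C * A)ᴴ := by
          rw [hAB, conjTranspose_mul]; simp only [Matrix.mul_assoc]
      _ = C * B * (C * A) := by rw [hCA]
  have hPUP : ((1 - C * A) * U * (1 - C * A))ᴴ = (1 - C * A) * U * (1 - C * A) := by
    rw [conjTranspose_mul, conjTranspose_mul, hP, hU.eq, Matrix.mul_assoc]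
  rw [IsHermitian, hermitianSolution, conjTranspose_add, conjTranspose_sub, conjTranspose_add,
    conjTranspose_conjTranspose, hCBCA, hPUP]
  abel

theorem mul_hermitianSolution (hAC : A * C * A = A) (hCA : (C * A)ᴴ = C * A)
    (hACB : A * (C * B) = B) (hAB : A * Bᴴ = B * Aᴴ) : A * hermitianSolution A C B U = B := by
  have hAP : A * (1 - C * A) = 0 := by
    rw [Matrix.mul_sub, Matrix.mul_one, ← Matrix.mul_assoc, hAC, sub_self]
  have hACB' : A * (C * B)ᴴ = B * (C * A) := by
    rw [conjTranspose_mul, ← Matrix.mul_assoc, hAB, Matrix.mul_assoc, ← conjTranspose_mul, hCA]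
  have hAPUP : A * ((1 - C * A) * U * (1 - C * A)) = 0 := by
    simp only [← Matrix.mul_assoc, hAP, Matrix.zero_mul]
  rw [hermitianSolution, Matrix.mul_add, Matrix.mul_sub, Matrix.mul_add, hACB, hACB',
    ← Matrix.mul_assoc A (C * B), hACB, hAPUP]
  abel

end HermitianSolution

end Matrix

theorem hermitian_solution_AX_eq_B {m n : ℕ} (A B : Matrix (Fin m) (Fin n) ℂ) :
    ((∃ X : Matrix (Fin n) (Fin n) ℂ, X.IsHermitian ∧ A * X = B) ↔
      (LinearMap.range B.mulVecLin ≤ LinearMap.range A.mulVecLin ∧ A * Bᴴ = B * Aᴴ)) ∧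
    ((LinearMap.range B.mulVecLin ≤ LinearMap.range A.mulVecLin ∧ A * Bᴴ = B * Aᴴ) →
      ∀ U : Matrix (Fin n) (Fin n) ℂ, U.IsHermitian →
        (pinv A * B + (pinv A * B)ᴴ - pinv A * B * (pinv A * A) +
            (1 - pinv A * A) * U * (1 - pinv A * A)).IsHermitian ∧
        A * (pinv A * B + (pinv A * B)ᴴ - pinv A * B * (pinv A * A) +
            (1 - pinv A * A) * U * (1 - pinv A * A)) = B) := by
  obtain ⟨hAC, -, -, hCA⟩ := isMoorePenrose_pinv A
  suffices hsuff : LinearMap.range B.mulVecLin ≤ LinearMap.range A.mulVecLin ∧ A * Bᴴ = B * Aᴴ →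
      ∀ U : Matrix (Fin n) (Fin n) ℂ, U.IsHermitian →
        (hermitianSolution A (pinv A) B U).IsHermitian ∧ A * hermitianSolution A (pinv A) B U = B
    from ⟨⟨fun ⟨X, hX, hAX⟩ => ?_, fun h => ⟨_, hsuff h 0 isHermitian_zero⟩⟩, hsuff⟩
  · subst hAX
    exact ⟨range_mulVecLin_mul_le A X, by rw [conjTranspose_mul, hX.eq, Matrix.mul_assoc]⟩
  · rintro ⟨hB, hAB⟩ U hU
    exact ⟨isHermitian_hermitianSolution hCA hAB hU,
      mul_hermitianSolution hAC hCA (mul_mul_eq_of_range_le hAC hB) hAB⟩
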